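/- arXiv:2206.02092 — 2 statements merged into one kernel-verified Lean document; each statement's English description precedes it below -/
import Mathlib

section
/- Let e_1,...,e_d be independent Rademacher random variables and a ∈ ℝ^d. Then E[|∑_{i=1}^d a_i e_i|] ≥ (1/√2) ‖a‖_2, where ‖a‖_2 is the Euclidean norm. -/
/-!
Since `∫ |∑ aᵢ eᵢ|` is the average of `f σ = |∑ aᵢ σᵢ|` over the cube `{±1}ᵈ`, expand `f` in
the Walsh basis `w_A σ = ∏_{i ∈ A} σᵢ`. By Parseval `∑_A f̂(A)² = ‖a‖²` (normalising the cube to a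
probability space). Flipping the `i`-th sign changes `f` by at most `2|aᵢ|`, and
`∑_A |A| f̂(A)² = ¼ ∑ᵢ 𝔼 (f - f ∘ flipᵢ)²`, so `∑_A |A| f̂(A)² ≤ ‖a‖² = ∑_A f̂(A)²`.
As `f` is even, `f̂({i}) = 0`, so `∑_{A ≠ ∅} f̂(A)² ≤ ∑_{A ≠ ∅} (|A| - 1) f̂(A)² ≤ f̂(∅)²`,
i.e. `‖a‖² ≤ 2 (𝔼 f)²`.
-/

open MeasureTheory ProbabilityTheory Finset

lemma sum_sq_le_two_mul_sq_empty {ι : Type*} [Fintype ι] {c : Finset ι → ℝ}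
    (hsingleton : ∀ i, c {i} = 0)
    (hcard : ∑ A : Finset ι, (#A : ℝ) * c A ^ 2 ≤ ∑ A : Finset ι, c A ^ 2) :
    ∑ A : Finset ι, c A ^ 2 ≤ 2 * c ∅ ^ 2 := by
  classical
  have hterm (A : Finset ι) :
      c A ^ 2 ≤ (#A - 1) * c A ^ 2 + if A = ∅ then 2 * c ∅ ^ 2 else 0 := by
    rcases A.eq_empty_or_nonempty with rfl | hA
    · rw [if_pos rfl, card_empty, Nat.cast_zero]
      linarith
    rw [if_neg hA.ne_empty]
    rcases Nat.lt_or_ge #A 2 with h | h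
    · obtain ⟨i, rfl⟩ := card_eq_one.mp (show #A = 1 by have := hA.card_pos; omega)
      simp [hsingleton]
    · have : (2 : ℝ) ≤ #A := by exact_mod_cast h
      nlinarith [sq_nonneg (c A)]
  calc ∑ A : Finset ι, c A ^ 2
      ≤ ∑ A : Finset ι, ((#A - 1) * c A ^ 2 + if A = ∅ then 2 * c ∅ ^ 2 else 0) :=
        sum_le_sum fun A _ => hterm A
    _ = ∑ A : Finset ι, (#A : ℝ) * c A ^ 2 - ∑ A : Finset ι, c A ^ 2 + 2 * c ∅ ^ 2 := by
        simp [sum_add_distrib, sub_mul, sum_sub_distrib]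
    _ ≤ 2 * c ∅ ^ 2 := by linarith

namespace BooleanCube

def boolSign (b : Bool) : ℝ := if b then 1 else -1

@[simp] lemma boolSign_true : boolSign true = 1 := rfl
@[simp] lemma boolSign_false : boolSign false = -1 := rfl
@[simp] lemma boolSign_not (b : Bool) : boolSign (!b) = -boolSign b := by cases b <;> simp
@[simp] lemma boolSign_mul_self (b : Bool) : boolSign b * boolSign b = 1 := by cases b <;> simp

variable {ι : Type*}

def walsh (A : Finset ι) (σ : ι → Bool) : ℝ := ∏ i ∈ A, boolSign (σ i)

section Flip

variable [DecidableEq ι]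

def flipAt (i : ι) (σ : ι → Bool) : ι → Bool := Function.update σ i (!σ i)

lemma flipAt_involutive (i : ι) : Function.Involutive (flipAt i) := fun σ => by simp [flipAt]

lemma boolSign_flipAt_apply (i j : ι) (σ : ι → Bool) :
    boolSign (flipAt i σ j) = if j = i then -boolSign (σ j) else boolSign (σ j) := by
  by_cases h : j = i
  · subst h; simp [flipAt]
  · simp [flipAt, h]

lemma walsh_flipAt (i : ι) (A : Finset ι) (σ : ι → Bool) :
    walsh A (flipAt i σ) = (if i ∈ A then -1 else 1) * walsh A σ := by
  rw [walsh, walsh, ← prod_ite_eq' A i fun _ => (-1 : ℝ), ← prod_mul_distrib]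
  refine prod_congr rfl fun j _ => ?_
  rw [boolSign_flipAt_apply]
  split_ifs <;> simp_all

end Flip

section Fourier

variable [Fintype ι]

lemma sum_walsh_mul_walsh (σ τ : ι → Bool) :
    ∑ A : Finset ι, walsh A σ * walsh A τ = if σ = τ then 2 ^ Fintype.card ι else 0 := by
  have hprod : ∑ A : Finset ι, walsh A σ * walsh A τ
      = ∏ i, (1 + boolSign (σ i) * boolSign (τ i)) := by
    simp [prod_one_add, walsh, prod_mul_distrib]
  rw [hprod]
  split_ifs with h
  · subst h; norm_num
  · obtain ⟨i, hi⟩ := Function.ne_iff.mp h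
    refine prod_eq_zero (mem_univ i) ?_
    cases hσ : σ i <;> cases hτ : τ i <;> simp_all

variable [DecidableEq ι]

def fourier (f : (ι → Bool) → ℝ) (A : Finset ι) : ℝ := ∑ σ, f σ * walsh A σ

lemma sum_fourier_mul_walsh (f : (ι → Bool) → ℝ) (σ : ι → Bool) :
    ∑ A : Finset ι, fourier f A * walsh A σ = 2 ^ Fintype.card ι * f σ := by
  simp_rw [fourier, sum_mul, mul_assoc]
  rw [sum_comm]
  simp_rw [← mul_sum, sum_walsh_mul_walsh]
  simp [mul_comm]

lemma sum_fourier_sq (f : (ι → Bool) → ℝ) :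
    ∑ A : Finset ι, fourier f A ^ 2 = 2 ^ Fintype.card ι * ∑ σ, f σ ^ 2 := by
  calc ∑ A : Finset ι, fourier f A ^ 2
      = ∑ A : Finset ι, fourier f A * ∑ σ, f σ * walsh A σ := by
        simp_rw [sq, fourier]
    _ = ∑ σ, f σ * ∑ A : Finset ι, fourier f A * walsh A σ := by
        simp_rw [mul_sum]
        rw [sum_comm]
        exact sum_congr rfl fun σ _ => sum_congr rfl fun A _ => by ring
    _ = 2 ^ Fintype.card ι * ∑ σ, f σ ^ 2 := by
        simp_rw [sum_fourier_mul_walsh, mul_sum]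
        exact sum_congr rfl fun σ _ => by ring

@[simp] lemma fourier_empty (f : (ι → Bool) → ℝ) : fourier f ∅ = ∑ σ, f σ := by
  simp [fourier, walsh]

lemma fourier_singleton_eq_zero_of_even {f : (ι → Bool) → ℝ}
    (hf : ∀ σ, f (fun j => !σ j) = f σ) (i : ι) : fourier f {i} = 0 := by
  have hnot : Function.Involutive fun σ : ι → Bool => fun j => !σ j := fun σ => by simp
  have h := hnot.bijective.sum_comp fun σ => f σ * walsh {i} σ
  simp only [hf, walsh, prod_singleton, boolSign_not, mul_neg, sum_neg_distrib] at h
  simp only [fourier, walsh, prod_singleton]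
  linarith

lemma fourier_sub_comp_flipAt (f : (ι → Bool) → ℝ) (i : ι) (A : Finset ι) :
    fourier (fun σ => f σ - f (flipAt i σ)) A = if i ∈ A then 2 * fourier f A else 0 := by
  have hflip :
      ∑ σ, f (flipAt i σ) * walsh A σ = (if i ∈ A then -1 else 1) * fourier f A := by
    rw [← (flipAt_involutive i).bijective.sum_comp]
    simp_rw [flipAt_involutive i _, walsh_flipAt, fourier, mul_sum]
    exact sum_congr rfl fun σ _ => by ring
  simp only [fourier, sub_mul, sum_sub_distrib]
  rw [hflip, ← fourier]
  split_ifs <;> ring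

lemma sum_card_mul_fourier_sq (f : (ι → Bool) → ℝ) :
    ∑ A : Finset ι, (#A : ℝ) * fourier f A ^ 2
      = 2 ^ Fintype.card ι / 4 * ∑ i, ∑ σ, (f σ - f (flipAt i σ)) ^ 2 := by
  have hcoord (i : ι) : ∑ A : Finset ι, (if i ∈ A then fourier f A ^ 2 else 0)
      = 2 ^ Fintype.card ι / 4 * ∑ σ, (f σ - f (flipAt i σ)) ^ 2 := by
    have h := sum_fourier_sq fun σ => f σ - f (flipAt i σ)
    have h4 : ∑ A : Finset ι, (if i ∈ A then 2 * fourier f A else 0) ^ 2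
        = 4 * ∑ A : Finset ι, (if i ∈ A then fourier f A ^ 2 else 0) := by
      rw [mul_sum]
      exact sum_congr rfl fun A _ => by split_ifs <;> ring
    simp_rw [fourier_sub_comp_flipAt] at h
    rw [h4] at h
    linarith
  rw [mul_sum]
  simp_rw [← hcoord]
  rw [sum_comm]
  simp [sum_ite_mem]

end Fourier

section SignedSum

variable [Fintype ι]

def signedSum (a : ι → ℝ) (σ : ι → Bool) : ℝ := ∑ i, a i * boolSign (σ i)

lemma signedSum_not (a : ι → ℝ) (σ : ι → Bool) :
    signedSum a (fun j => !σ j) = -signedSum a σ := by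
  simp [signedSum]

variable [DecidableEq ι]

lemma signedSum_flipAt (a : ι → ℝ) (i : ι) (σ : ι → Bool) :
    signedSum a (flipAt i σ) = signedSum a σ - 2 * a i * boolSign (σ i) := by
  have hterm (j : ι) : a j * boolSign (flipAt i σ j)
      = a j * boolSign (σ j) - if j = i then 2 * a i * boolSign (σ i) else 0 := by
    rw [boolSign_flipAt_apply]
    split_ifs with h
    · subst h; ring
    · ring
  simp [signedSum, hterm, sum_sub_distrib]

lemma sum_boolSign_mul_boolSign (i j : ι) :
    ∑ σ : ι → Bool, boolSign (σ i) * boolSign (σ j)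
      = if i = j then 2 ^ Fintype.card ι else 0 := by
  split_ifs with h
  · simp [h]
  · have hflip :=
      (flipAt_involutive i).bijective.sum_comp fun σ => boolSign (σ i) * boolSign (σ j)
    simp only [boolSign_flipAt_apply, if_true, if_neg (Ne.symm h), neg_mul, sum_neg_distrib]
      at hflip
    linarith

lemma sum_signedSum_sq (a : ι → ℝ) :
    ∑ σ, signedSum a σ ^ 2 = 2 ^ Fintype.card ι * ∑ i, a i ^ 2 := by
  calc ∑ σ, signedSum a σ ^ 2
      = ∑ i, ∑ j, a i * a j * ∑ σ : ι → Bool, boolSign (σ i) * boolSign (σ j) := by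
        simp_rw [signedSum, sq, sum_mul_sum, mul_sum]
        rw [sum_comm]
        refine sum_congr rfl fun i _ => ?_
        rw [sum_comm]
        exact sum_congr rfl fun j _ => sum_congr rfl fun σ _ => by ring
    _ = 2 ^ Fintype.card ι * ∑ i, a i ^ 2 := by
        simp [sum_boolSign_mul_boolSign, mul_sum, sq, mul_comm]

theorem sum_sq_le_two_mul_sq_sum_abs_signedSum (a : ι → ℝ) :
    (2 ^ Fintype.card ι) ^ 2 * ∑ i, a i ^ 2 ≤ 2 * (∑ σ, |signedSum a σ|) ^ 2 := by
  set f : (ι → Bool) → ℝ := fun σ => |signedSum a σ|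
  have hparseval :
      ∑ A : Finset ι, fourier f A ^ 2 = (2 ^ Fintype.card ι) ^ 2 * ∑ i, a i ^ 2 := by
    rw [sum_fourier_sq]
    simp only [f, sq_abs, sum_signedSum_sq]
    ring
  have hjump (i : ι) (σ : ι → Bool) : (f σ - f (flipAt i σ)) ^ 2 ≤ 4 * a i ^ 2 := by
    calc (f σ - f (flipAt i σ)) ^ 2 ≤ (signedSum a σ - signedSum a (flipAt i σ)) ^ 2 :=
          sq_le_sq.mpr (abs_abs_sub_abs_le_abs_sub _ _)
      _ = 4 * a i ^ 2 := by
          rw [signedSum_flipAt]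
          linear_combination (4 * a i ^ 2) * boolSign_mul_self (σ i)
  have hcard :
      ∑ A : Finset ι, (#A : ℝ) * fourier f A ^ 2 ≤ ∑ A : Finset ι, fourier f A ^ 2 := by
    rw [sum_card_mul_fourier_sq, hparseval]
    calc 2 ^ Fintype.card ι / 4 * ∑ i, ∑ σ, (f σ - f (flipAt i σ)) ^ 2
        ≤ 2 ^ Fintype.card ι / 4 * ∑ i, ∑ σ : ι → Bool, 4 * a i ^ 2 := by
          gcongr with i _ σ _
          exact hjump i σ
      _ = (2 ^ Fintype.card ι) ^ 2 * ∑ i, a i ^ 2 := by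
          simp only [sum_const, card_univ, Fintype.card_fun, Fintype.card_bool, nsmul_eq_mul,
            mul_sum]
          exact sum_congr rfl fun i _ => by push_cast; ring
  have heven : ∀ σ, f (fun j => !σ j) = f σ := fun σ => by simp [f, signedSum_not]
  have := sum_sq_le_two_mul_sq_empty (fourier_singleton_eq_zero_of_even heven) hcard
  rwa [hparseval, fourier_empty] at this

theorem sqrt_sum_sq_div_sqrt_two_le_average_abs_signedSum (a : ι → ℝ) :
    √(∑ i, a i ^ 2) / √2 ≤ (2 ^ Fintype.card ι)⁻¹ * ∑ σ, |signedSum a σ| := by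
  have h := sum_sq_le_two_mul_sq_sum_abs_signedSum a
  rw [div_le_iff₀ (by positivity), Real.sqrt_le_iff]
  refine ⟨by positivity, ?_⟩
  rw [mul_pow, Real.sq_sqrt zero_le_two, mul_pow, inv_pow, ← div_eq_inv_mul,
    div_mul_eq_mul_div, le_div_iff₀ (by positivity)]
  linarith

end SignedSum

end BooleanCube

open BooleanCube

section

variable {Ω : Type*} [MeasurableSpace Ω] {μ : Measure Ω} [IsProbabilityMeasure μ]

theorem integral_comp_eq_average_of_iIndepFun {ι : Type*} [Fintype ι] [DecidableEq ι]
    {b : ι → Ω → Bool} (hb : ∀ i, Measurable (b i)) (hind : iIndepFun b μ)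
    (hfair : ∀ i x, μ {ω | b i ω = x} = 2⁻¹) (G : (ι → Bool) → ℝ) :
    ∫ ω, G (fun i => b i ω) ∂μ = (2 ^ Fintype.card ι)⁻¹ * ∑ σ, G σ := by
  rw [← integral_map (measurable_pi_lambda _ hb).aemeasurable
      (measurable_of_finite G).aestronglyMeasurable,
    (iIndepFun_iff_map_fun_eq_pi_map fun i => (hb i).aemeasurable).mp hind,
    integral_fintype .of_finite, mul_sum]
  refine sum_congr rfl fun σ _ => ?_
  rw [smul_eq_mul]
  congr 1
  simp [measureReal_def, Measure.map_apply (hb _) (measurableSet_singleton _), Set.preimage, hfair]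

variable {X : Ω → ℝ}

lemma ae_eq_boolSign_of_rademacher (hX : Measurable X) (h1 : μ {ω | X ω = 1} = 1 / 2)
    (h2 : μ {ω | X ω = -1} = 1 / 2) : X =ᵐ[μ] fun ω => boolSign (decide (X ω = 1)) := by
  have hm (c : ℝ) : MeasurableSet {ω | X ω = c} := hX (measurableSet_singleton c)
  have hsign : ∀ᵐ ω ∂μ, X ω = 1 ∨ X ω = -1 := by
    have hdisj : Disjoint {ω | X ω = 1} {ω | X ω = -1} :=
      Set.disjoint_left.mpr fun ω h h' => by norm_num [Set.mem_ofPred_eq.mp h] at h'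
    rw [ae_iff, ← Set.compl_ofPred, Set.ofPred_or, prob_compl_eq_zero_iff
        ((hm _).union (hm _)),
      measure_union hdisj (hm _), h1, h2, ENNReal.add_halves]
  filter_upwards [hsign] with ω hω
  rcases hω with h | h <;> simp [h, boolSign]

lemma measure_decide_eq_one_eq_inv_two (hX : Measurable X) (h1 : μ {ω | X ω = 1} = 1 / 2)
    (x : Bool) :
    μ {ω | decide (X ω = 1) = x} = 2⁻¹ := by
  have hm : MeasurableSet {ω | X ω = 1} := hX (measurableSet_singleton 1)
  cases x
  · simp only [decide_eq_false_iff_not, ← Set.compl_ofPred]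
    rw [prob_compl_eq_one_sub hm, h1, one_div, ENNReal.one_sub_inv_two]
  · simpa using h1

end

/-- Khintchine first-moment lower bound with Haagerup's constant 1/√2. -/
theorem stmt_2 (d : ℕ) (Ω : Type*) [MeasureSpace Ω] [IsProbabilityMeasure (ℙ : Measure Ω)]
    (a : Fin d → ℝ) (e : Fin d → Ω → ℝ)
    (hmeas : ∀ i, Measurable (e i))
    (hind : iIndepFun e ℙ)
    (hrad : ∀ i, ℙ {ω | e i ω = 1} = 1 / 2 ∧ ℙ {ω | e i ω = -1} = 1 / 2) :
    Real.sqrt (∑ i, a i ^ 2) / Real.sqrt 2 ≤ ∫ ω, |∑ i, a i * e i ω| := by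
  have hdecide : Measurable fun x : ℝ => decide (x = 1) :=
    measurable_to_bool (by convert measurableSet_singleton (1 : ℝ); ext; simp)
  have hsign : ∀ᵐ ω, ∀ i, e i ω = boolSign (decide (e i ω = 1)) :=
    ae_all_iff.mpr fun i => ae_eq_boolSign_of_rademacher (hmeas i) (hrad i).1 (hrad i).2
  calc √(∑ i, a i ^ 2) / √2 ≤ (2 ^ d)⁻¹ * ∑ σ, |signedSum a σ| := by
        simpa using sqrt_sum_sq_div_sqrt_two_le_average_abs_signedSum a
    _ = ∫ ω, |signedSum a fun i => decide (e i ω = 1)| := by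
        rw [integral_comp_eq_average_of_iIndepFun (b := fun i ω => decide (e i ω = 1))
          (fun i => hdecide.comp (hmeas i)) (hind.comp _ fun _ => hdecide)
          (fun i => measure_decide_eq_one_eq_inv_two (hmeas i) (hrad i).1)
          fun σ => |signedSum a σ|,
          Fintype.card_fin]
    _ = ∫ ω, |∑ i, a i * e i ω| :=
        integral_congr_ae (hsign.mono fun ω hω => by simp only [signedSum, ← hω])
end

section
/- Let A ⪰ B ≻ 0 be positive definite d×d matrices. Then for every x ∈ ℝ^d with x ≠ 0, (x^⊤ A x)/(x^⊤ B x) ≤ det(A)/det(B). -/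
/-!
Conjugating by `B^{-1/2}` reduces to `B = 1`: the matrix `M = B^{-1/2} A B^{-1/2}` satisfies
`M ⪰ 1`, so all its eigenvalues are at least `1`, and then each of them is at most their product
`det M = det A / det B`. Hence `M ⪯ (det A / det B) • 1`, i.e. `A ⪯ (det A / det B) • B`, and the
claim is this Loewner inequality evaluated at `x`.
-/

open Matrix
open scoped MatrixOrder ComplexOrder

namespace Matrix

variable {𝕜 n : Type*} [RCLike 𝕜] [Fintype n] [DecidableEq n]

theorem le_det_smul_one_of_one_le {M : Matrix n n 𝕜} (hM : 1 ≤ M) : M ≤ M.det • 1 := by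
  have hH : M.IsHermitian := IsSelfAdjoint.of_nonneg (zero_le_one.trans hM)
  have hspec := hH.spectrum_real_eq_range_eigenvalues
  have one_le : ∀ i, 1 ≤ hH.eigenvalues i := by
    rw [← map_one (algebraMap ℝ (Matrix n n 𝕜)), algebraMap_le_iff_le_spectrum, hspec] at hM
    exact fun i ↦ hM _ ⟨i, rfl⟩
  have hdet : M.det • (1 : Matrix n n 𝕜) = algebraMap ℝ _ (∏ i, hH.eigenvalues i) := by
    rw [hH.det_eq_prod_eigenvalues, Algebra.algebraMap_eq_smul_one,
      RCLike.real_smul_eq_coe_smul (K := 𝕜)]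
    push_cast
    rfl
  rw [hdet, le_algebraMap_iff_spectrum_le, hspec]
  rintro _ ⟨i, rfl⟩
  simpa using Finset.prod_le_prod_of_subset_of_one_le (Finset.subset_univ {i})
    (fun j _ ↦ zero_le_one.trans (one_le j)) (fun j _ _ ↦ one_le j)

theorem le_det_div_det_smul_of_le {A B : Matrix n n 𝕜} (hB : B.PosDef) (hBA : B ≤ A) :
    A ≤ (A.det / B.det) • B := by
  set S := CFC.sqrt B
  have hS : IsSelfAdjoint S := IsSelfAdjoint.of_nonneg (CFC.sqrt_nonneg B)
  have hSS : S * S = B := CFC.sqrt_mul_sqrt_self B hB.posSemidef.nonneg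
  have hdetS : S.det * S.det = B.det := by rw [← det_mul, hSS]
  have hS_unit : IsUnit S.det := isUnit_iff_ne_zero.mpr fun h ↦ by
    simpa [← hdetS, h] using hB.det_pos.ne'
  have hS_inv : IsSelfAdjoint S⁻¹ := IsHermitian.inv hS
  set M := S⁻¹ * A * S⁻¹
  have hA : A = S * M * S := by
    simp only [M, ← mul_assoc, mul_nonsing_inv S hS_unit, one_mul]
    rw [mul_assoc, nonsing_inv_mul S hS_unit, mul_one]
  have hM : 1 ≤ M :=
    calc (1 : Matrix n n 𝕜) = S⁻¹ * B * S⁻¹ := by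
          rw [← hSS, ← mul_assoc, nonsing_inv_mul S hS_unit, one_mul, mul_nonsing_inv S hS_unit]
      _ ≤ M := hS_inv.conjugate_le_conjugate hBA
  have hdetM : M.det = A.det / B.det := by
    have hS0 : S.det ≠ 0 := hS_unit.ne_zero
    rw [det_mul, det_mul, det_nonsing_inv, Ring.inverse_eq_inv', ← hdetS]
    field_simp
  calc A = S * M * S := hA
    _ ≤ S * (M.det • 1) * S := hS.conjugate_le_conjugate (le_det_smul_one_of_one_le hM)
    _ = (A.det / B.det) • B := by rw [mul_smul_comm, mul_one, smul_mul_assoc, hSS, hdetM]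

end Matrix

/-- determinant comparison of quadratic forms for A ⪰ B ≻ 0. -/
theorem stmt_14 (d : ℕ) (A B : Matrix (Fin d) (Fin d) ℝ)
    (hB : B.PosDef) (hAB : (A - B).PosSemidef)
    (x : Fin d → ℝ) (hx : x ≠ 0) :
    (x ⬝ᵥ A.mulVec x) / (x ⬝ᵥ B.mulVec x) ≤ A.det / B.det := by
  have hloewner : ((A.det / B.det) • B - A).PosSemidef := le_det_div_det_smul_of_le hB hAB
  have hquad : x ⬝ᵥ A *ᵥ x ≤ A.det / B.det * (x ⬝ᵥ B *ᵥ x) := by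
    simpa [sub_mulVec, smul_mulVec, sub_nonneg] using hloewner.dotProduct_mulVec_nonneg x
  have hxBx : 0 < x ⬝ᵥ B *ᵥ x := by simpa using hB.dotProduct_mulVec_pos hx
  rwa [div_le_iff₀ hxBx]
end
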